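/- arXiv:1803.02673 — 2 statements merged into one kernel-verified Lean document; each statement's English description precedes it below -/
import Mathlib

section
/- Given two probability distributions (s₁,…,s_d) and (t₁,…,t_d), there exists a d×d matrix X with nonnegative entries such that ∑ⱼ X_{ij} = 1 for every i, and X_{ij}s_i + X_{ji}s_j = X_{ij}t_i + X_{ji}t_j for all i, j. -/
open scoped Matrix Kronecker ComplexOrder

noncomputable section

namespace QEMD

variable {m n : Type*} [Fintype m] [Fintype n] [DecidableEq m] [DecidableEq n]

/-- Total square root: the PSD square root if `A` is PSD, else `0`. -/
def msqrt (A : Matrix n n ℂ) : Matrix n n ℂ :=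
  letI := Classical.dec A.PosSemidef
  if h : A.PosSemidef then
    (h.1.eigenvectorUnitary : Matrix n n ℂ) *
      Matrix.diagonal (fun i => ((Real.sqrt (h.1.eigenvalues i) : ℝ) : ℂ)) *
      (star h.1.eigenvectorUnitary : Matrix n n ℂ) else 0

/-- Trace norm `‖A‖₁ = Tr √(AᴴA)`. -/
def traceNorm (A : Matrix n n ℂ) : ℝ :=
  ((msqrt (Aᴴ * A)).trace).re

/-- Trace distance `D(ρ,σ) = ½‖ρ-σ‖₁`. -/
def traceDist (ρ σ : Matrix n n ℂ) : ℝ := traceNorm (ρ - σ) / 2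

/-- Fidelity `F(ρ,σ) = Tr √(√ρ σ √ρ)`. -/
def fidelity (ρ σ : Matrix n n ℂ) : ℝ :=
  ((msqrt (msqrt ρ * σ * msqrt ρ)).trace).re

/-- Density matrix predicate. -/
def IsDensity (ρ : Matrix n n ℂ) : Prop := ρ.PosSemidef ∧ ρ.trace = 1

/-- Projector `|v⟩⟨v|` onto a vector. -/
def proj (v : n → ℂ) : Matrix n n ℂ := Matrix.of fun i j => v i * star (v j)

/-- Partial trace over the first (left) factor. -/
def traceLeft (ρ : Matrix (m × n) (m × n) ℂ) : Matrix n n ℂ :=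
  Matrix.of fun i j => ∑ k, ρ (k, i) (k, j)

/-- Partial trace over the second (right) factor. -/
def traceRight (ρ : Matrix (m × n) (m × n) ℂ) : Matrix m m ℂ :=
  Matrix.of fun i j => ∑ k, ρ (i, k) (j, k)

/-- The swap operator `S|αβ⟩ = |βα⟩` on `ℂ^d ⊗ ℂ^d`. -/
def swap (d : ℕ) : Matrix (Fin d × Fin d) (Fin d × Fin d) ℂ :=
  Matrix.of fun p q => if p.1 = q.2 ∧ p.2 = q.1 then 1 else 0

/-- Projection onto the symmetric subspace, `P_s = (I + S)/2`. -/
def Psym (d : ℕ) : Matrix (Fin d × Fin d) (Fin d × Fin d) ℂ := (2:ℂ)⁻¹ • (1 + swap d)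

/-- Projection onto the antisymmetric subspace, `P_as = (I - S)/2`. -/
def Pasym (d : ℕ) : Matrix (Fin d × Fin d) (Fin d × Fin d) ℂ := (2:ℂ)⁻¹ • (1 - swap d)

/-- `ρAB` is a quantum coupling of `ρA` and `ρB`. -/
def IsCoupling (ρAB : Matrix (m × n) (m × n) ℂ) (ρA : Matrix m m ℂ)
    (ρB : Matrix n n ℂ) : Prop :=
  IsDensity ρAB ∧ traceRight ρAB = ρA ∧ traceLeft ρAB = ρB

/-- The maximally entangled vector `|Φ⟩ = (1/√d) ∑ᵢ |i⟩|i⟩`. -/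
def maxEnt (d : ℕ) : Fin d × Fin d → ℂ :=
  fun p => if p.1 = p.2 then ((1 / Real.sqrt d : ℝ) : ℂ) else 0

/-! With `u = s - t`, which sums to zero, the required identity says that the flow `X i j * u i`
is antisymmetric. A row with surplus `u i > 0` is spread over the deficits `(u j)⁻`, a row with
deficit over the surpluses `(u j)⁺`, both normalised by `S = ∑ (u k)⁺ = ∑ (u k)⁻`; then
`X i j * u i = ((u i)⁺ (u j)⁻ - (u i)⁻ (u j)⁺) / S`, which is antisymmetric in `i, j`. -/

section Balancing

variable {ι 𝕜 : Type*} [Fintype ι] [Field 𝕜] [LinearOrder 𝕜] [IsStrictOrderedRing 𝕜]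

theorem sum_posPart_eq_sum_negPart {u : ι → 𝕜} (hu : ∑ i, u i = 0) :
    ∑ i, (u i)⁺ = ∑ i, (u i)⁻ := by
  rw [← sub_eq_zero, ← Finset.sum_sub_distrib]
  simpa only [posPart_sub_negPart] using hu

variable [DecidableEq ι]

def balancingMatrix (u : ι → 𝕜) : Matrix ι ι 𝕜 :=
  Matrix.of fun i j =>
    if 0 < u i then (u j)⁻ / ∑ k, (u k)⁺
    else if u i < 0 then (u j)⁺ / ∑ k, (u k)⁺
    else if i = j then 1 else 0

theorem balancingMatrix_nonneg (u : ι → 𝕜) (i j : ι) : 0 ≤ balancingMatrix u i j := by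
  have hS : 0 ≤ ∑ k, (u k)⁺ := Finset.sum_nonneg fun k _ => posPart_nonneg (u k)
  simp only [balancingMatrix, Matrix.of_apply]
  split_ifs <;> positivity

theorem balancingMatrix_row_sum {u : ι → 𝕜} (hu : ∑ i, u i = 0) (i : ι) :
    ∑ j, balancingMatrix u i j = 1 := by
  simp only [balancingMatrix, Matrix.of_apply]
  rcases lt_trichotomy (u i) 0 with hneg | hzero | hpos
  · have hS : 0 < ∑ k, (u k)⁺ := by
      rw [sum_posPart_eq_sum_negPart hu]
      exact Finset.sum_pos' (fun k _ => negPart_nonneg (u k))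
        ⟨i, Finset.mem_univ i, negPart_pos hneg⟩
    simp only [hneg.not_gt, hneg, if_false, if_true, ← Finset.sum_div, div_self hS.ne']
  · simp [hzero]
  · have hS : 0 < ∑ k, (u k)⁺ :=
      Finset.sum_pos' (fun k _ => posPart_nonneg (u k)) ⟨i, Finset.mem_univ i, posPart_pos hpos⟩
    simp only [hpos, if_true, ← Finset.sum_div]
    rw [← sum_posPart_eq_sum_negPart hu, div_self hS.ne']

theorem balancingMatrix_mul_apply (u : ι → 𝕜) (i j : ι) :
    balancingMatrix u i j * u i =
      ((u i)⁺ * (u j)⁻ - (u i)⁻ * (u j)⁺) / ∑ k, (u k)⁺ := by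
  simp only [balancingMatrix, Matrix.of_apply]
  rcases lt_trichotomy (u i) 0 with hneg | hzero | hpos
  · rw [if_neg hneg.not_gt, if_pos hneg, posPart_eq_zero.mpr hneg.le, negPart_eq_neg.mpr hneg.le]
    ring
  · simp [hzero]
  · rw [if_pos hpos, posPart_eq_self.mpr hpos.le, negPart_eq_zero.mpr hpos.le]
    ring

theorem balancingMatrix_flow_antisymm (u : ι → 𝕜) (i j : ι) :
    balancingMatrix u i j * u i + balancingMatrix u j i * u j = 0 := by
  rw [balancingMatrix_mul_apply, balancingMatrix_mul_apply, ← add_div]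
  ring

end Balancing

theorem stmt14_general (d : ℕ) (s t : Fin d → ℝ)
    (hss : ∑ i, s i = 1) (hst : ∑ i, t i = 1) :
    ∃ X : Matrix (Fin d) (Fin d) ℝ,
      (∀ i j, 0 ≤ X i j) ∧
      (∀ i, ∑ j, X i j = 1) ∧
      (∀ i j, X i j * s i + X j i * s j = X i j * t i + X j i * t j) := by
  have hu : ∑ i, (s - t) i = 0 := by simp [Finset.sum_sub_distrib, hss, hst]
  refine ⟨balancingMatrix (s - t), balancingMatrix_nonneg _, balancingMatrix_row_sum hu,
    fun i j => ?_⟩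
  have hflow := balancingMatrix_flow_antisymm (s - t) i j
  rw [Pi.sub_apply, Pi.sub_apply] at hflow
  linear_combination hflow

theorem stmt14 (d : ℕ) (s t : Fin d → ℝ)
    (hs : ∀ i, 0 ≤ s i) (ht : ∀ i, 0 ≤ t i)
    (hss : ∑ i, s i = 1) (hst : ∑ i, t i = 1) :
    ∃ X : Matrix (Fin d) (Fin d) ℝ,
      (∀ i j, 0 ≤ X i j) ∧
      (∀ i, ∑ j, X i j = 1) ∧
      (∀ i j, X i j * s i + X j i * s j = X i j * t i + X j i * t j) :=
  stmt14_general d s t hss hst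
end QEMD
end
end

section
/- Let ρ = s₁|u₁⟩⟨u₁| + s₂|u₂⟩⟨u₂| and σ = t₁|v₁⟩⟨v₁| + t₂|v₂⟩⟨v₂| be density operators with s₁+s₂ = t₁+t₂ = 1, ⟨v₁|v₂⟩ = 0, ⟨vᵢ|uᵢ⟩ ≥ 0, and F(ρ,σ) = √(s₁t₁)⟨v₁|u₁⟩ + √(s₂t₂)⟨v₂|u₂⟩. Then there exists a coupling τ of ρ and σ with Tr(P_s τ) ≥ ½ + ½ F(ρ,σ)². -/
open scoped Matrix Kronecker ComplexOrder

noncomputable section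

namespace QEMD

variable {m n : Type*} [Fintype m] [Fintype n] [DecidableEq m] [DecidableEq n]

/-!
Take `τ = |w⟩⟨w| + |x⟩⟨x|` with `w = √(s₁t₁) u₁v₁ - √(s₂t₂) ω u₂v₂` and
`x = √(s₁t₂) u₁v₂ + √(s₂t₁) u₂v₁`. Orthonormality of `v₁, v₂` gives `Tr₂ τ = ρ`, and a suitable
phase `ω` makes the off-diagonal terms of `Tr₁ τ` cancel, giving `Tr₁ τ = σ`. Expanding
`Tr(Sτ) = ⟨w|Sw⟩ + ⟨x|Sx⟩` yields `|F̃|²` plus a square modulus, where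
`F̃ = √(s₁t₁)⟨v₁|u₁⟩ + √(s₂t₂)⟨v₂|u₂⟩` has real part `F(ρ,σ)`; hence
`Tr(P_s τ) = (1 + Tr(Sτ))/2 ≥ 1/2 + F(ρ,σ)²/2`.
-/

open Matrix

def tensorVec {ι κ : Type*} (u : ι → ℂ) (v : κ → ℂ) : ι × κ → ℂ := fun p => u p.1 * v p.2

local infixl:100 " ⊗ᵥ " => tensorVec

section PartialTrace

variable {ι κ : Type*}

lemma proj_eq_vecMulVec (v : ι → ℂ) : proj v = vecMulVec v (star v) := rfl

lemma traceRight_add [Fintype κ] (A B : Matrix (ι × κ) (ι × κ) ℂ) :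
    traceRight (A + B) = traceRight A + traceRight B := by
  ext i j
  simp [traceRight, Finset.sum_add_distrib]

lemma traceRight_smul [Fintype κ] (c : ℂ) (A : Matrix (ι × κ) (ι × κ) ℂ) :
    traceRight (c • A) = c • traceRight A := by
  ext i j
  simp [traceRight, Finset.mul_sum]

lemma traceLeft_add [Fintype ι] (A B : Matrix (ι × κ) (ι × κ) ℂ) :
    traceLeft (A + B) = traceLeft A + traceLeft B := by
  ext i j
  simp [traceLeft, Finset.sum_add_distrib]

lemma traceLeft_smul [Fintype ι] (c : ℂ) (A : Matrix (ι × κ) (ι × κ) ℂ) :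
    traceLeft (c • A) = c • traceLeft A := by
  ext i j
  simp [traceLeft, Finset.mul_sum]

lemma traceRight_vecMulVec_tensorVec [Fintype κ] (u u' : ι → ℂ) (v v' : κ → ℂ) :
    traceRight (vecMulVec (u ⊗ᵥ v) (star (u' ⊗ᵥ v'))) =
      (star v' ⬝ᵥ v) • vecMulVec u (star u') := by
  ext i j
  simp only [traceRight, vecMulVec_apply, tensorVec, Pi.star_apply, star_mul', of_apply, dotProduct,
    Matrix.smul_apply, smul_eq_mul, Finset.sum_mul]
  exact Finset.sum_congr rfl fun k _ => by ring

lemma traceLeft_vecMulVec_tensorVec [Fintype ι] (u u' : ι → ℂ) (v v' : κ → ℂ) :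
    traceLeft (vecMulVec (u ⊗ᵥ v) (star (u' ⊗ᵥ v'))) =
      (star u' ⬝ᵥ u) • vecMulVec v (star v') := by
  ext i j
  simp only [traceLeft, vecMulVec_apply, tensorVec, Pi.star_apply, star_mul', of_apply, dotProduct,
    Matrix.smul_apply, smul_eq_mul, Finset.sum_mul]
  exact Finset.sum_congr rfl fun k _ => by ring

lemma star_tensorVec_dotProduct_tensorVec [Fintype ι] [Fintype κ] (u u' : ι → ℂ) (v v' : κ → ℂ) :
    star (u ⊗ᵥ v) ⬝ᵥ u' ⊗ᵥ v' = (star u ⬝ᵥ u') * (star v ⬝ᵥ v') := by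
  simp only [dotProduct, Fintype.sum_prod_type, Finset.sum_mul_sum, Pi.star_apply, tensorVec,
    star_mul']
  exact Finset.sum_congr rfl fun i _ => Finset.sum_congr rfl fun j _ => by ring

lemma star_dotProduct_self_eq_one [Fintype ι] {u : ι → ℂ} (h : ∑ i, ‖u i‖ ^ 2 = 1) :
    star u ⬝ᵥ u = 1 := by
  simp only [dotProduct, Pi.star_apply, Complex.star_def, Complex.conj_mul']
  exact_mod_cast h

lemma trace_proj [Fintype ι] (v : ι → ℂ) : (proj v).trace = star v ⬝ᵥ v := by
  rw [proj_eq_vecMulVec, trace_vecMulVec, dotProduct_comm]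

lemma trace_mul_proj [Fintype ι] (A : Matrix ι ι ℂ) (v : ι → ℂ) :
    (A * proj v).trace = star v ⬝ᵥ A *ᵥ v := by
  rw [proj_eq_vecMulVec, mul_vecMulVec, trace_vecMulVec, dotProduct_comm]

lemma proj_posSemidef [Fintype ι] (v : ι → ℂ) : (proj v).PosSemidef :=
  posSemidef_vecMulVec_self_star v

lemma proj_smul_add_smul (α β : ℂ) (x y : ι → ℂ) :
    proj (α • x + β • y) = (α * star α) • proj x + (β * star β) • proj y
      + (α * star β) • vecMulVec x (star y) + (β * star α) • vecMulVec y (star x) := by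
  simp only [proj_eq_vecMulVec, star_add, star_smul, add_vecMulVec, vecMulVec_add, smul_vecMulVec,
    vecMulVec_smul]
  module

lemma traceRight_proj_smul_tensorVec_add_smul_tensorVec [Fintype κ] (α β : ℂ) (u u' : ι → ℂ)
    {v v' : κ → ℂ}
    (hv : star v ⬝ᵥ v = 1) (hv' : star v' ⬝ᵥ v' = 1) (hvv' : star v ⬝ᵥ v' = 0) :
    traceRight (proj (α • u ⊗ᵥ v + β • u' ⊗ᵥ v')) =
      (α * star α) • proj u + (β * star β) • proj u' := by
  have hv'v : star v' ⬝ᵥ v = 0 := by rw [star_dotProduct, hvv', star_zero]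
  rw [proj_smul_add_smul]
  simp only [traceRight_add, traceRight_smul, proj_eq_vecMulVec,
    traceRight_vecMulVec_tensorVec, hv, hv', hvv', hv'v]
  module

lemma traceLeft_proj_smul_tensorVec_add_smul_tensorVec [Fintype ι] (α β : ℂ) {u u' : ι → ℂ}
    (v v' : κ → ℂ)
    (hu : star u ⬝ᵥ u = 1) (hu' : star u' ⬝ᵥ u' = 1) :
    traceLeft (proj (α • u ⊗ᵥ v + β • u' ⊗ᵥ v')) =
      (α * star α) • proj v + (β * star β) • proj v'
        + (α * star β * (star u' ⬝ᵥ u)) • vecMulVec v (star v')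
        + (β * star α * (star u ⬝ᵥ u')) • vecMulVec v' (star v) := by
  rw [proj_smul_add_smul]
  simp only [traceLeft_add, traceLeft_smul, proj_eq_vecMulVec,
    traceLeft_vecMulVec_tensorVec, hu, hu']
  module

lemma trace_traceRight [Fintype ι] [Fintype κ] (A : Matrix (ι × κ) (ι × κ) ℂ) :
    (traceRight A).trace = A.trace := by
  simp [traceRight, Matrix.trace, Fintype.sum_prod_type]

lemma isCoupling_of_traceRight_of_traceLeft [Fintype ι] [Fintype κ]
    {A : Matrix (ι × κ) (ι × κ) ℂ} {ρ : Matrix ι ι ℂ} {σ : Matrix κ κ ℂ}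
    (hA : A.PosSemidef) (hρ : traceRight A = ρ) (hσ : traceLeft A = σ) (hρ1 : ρ.trace = 1) :
    IsCoupling A ρ σ :=
  ⟨⟨hA, by rw [← trace_traceRight, hρ, hρ1]⟩, hρ, hσ⟩

end PartialTrace

section Swap

variable {d : ℕ}

lemma swap_mulVec (y : Fin d × Fin d → ℂ) : swap d *ᵥ y = fun p => y p.swap := by
  ext p
  rw [mulVec, dotProduct, Finset.sum_eq_single p.swap]
  · simp [swap]
  · rintro q - hq
    simp only [swap, of_apply, ite_mul, one_mul, zero_mul, ite_eq_right_iff]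
    rintro ⟨h1, h2⟩
    exact absurd (Prod.ext h2.symm h1.symm) hq
  · simp

lemma swap_mulVec_tensorVec (u v : Fin d → ℂ) : swap d *ᵥ u ⊗ᵥ v = v ⊗ᵥ u := by
  ext p
  simp [swap_mulVec, tensorVec, mul_comm]

lemma trace_Psym_mul (A : Matrix (Fin d × Fin d) (Fin d × Fin d) ℂ) :
    (Psym d * A).trace = (A.trace + (swap d * A).trace) / 2 := by
  rw [Psym, smul_mul, trace_smul, add_mul, one_mul, trace_add, smul_eq_mul, inv_mul_eq_div]

end Swap

section Coupling

lemma star_ofReal (r : ℝ) : star (r : ℂ) = r := Complex.conj_ofReal r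

lemma ofReal_sqrt_sq {r : ℝ} (h : 0 ≤ r) : ((√r : ℝ) : ℂ) ^ 2 = r := by
  exact_mod_cast Real.sq_sqrt h

lemma exists_phase_mul_star_eq (z : ℂ) :
    ∃ ω : ℂ, ω * star ω = 1 ∧ ω * star z = z := by
  rcases eq_or_ne z 0 with rfl | hz
  · exact ⟨1, by simp, by simp⟩
  · have hz' : star z ≠ 0 := star_ne_zero.2 hz
    refine ⟨z / star z, ?_, div_mul_cancel₀ z hz'⟩
    rw [star_div₀, star_star]
    field_simp

variable {ι κ : Type*}

/-- `ω` plays the role of the paper's `e^{2iθ}`, and `√sᵢ √tⱼ` that of `√(sᵢtⱼ)`. -/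
def symCoupling (s1 s2 t1 t2 : ℝ) (ω : ℂ) (u1 u2 : ι → ℂ) (v1 v2 : κ → ℂ) :
    Matrix (ι × κ) (ι × κ) ℂ :=
  proj ((√s1 * √t1 : ℂ) • u1 ⊗ᵥ v1 + (-(√s2 * √t2 * ω) : ℂ) • u2 ⊗ᵥ v2)
    + proj ((√s1 * √t2 : ℂ) • u1 ⊗ᵥ v2 + (√s2 * √t1 : ℂ) • u2 ⊗ᵥ v1)

lemma symCoupling_posSemidef [Fintype ι] [Fintype κ] (s1 s2 t1 t2 : ℝ) (ω : ℂ) (u1 u2 : ι → ℂ)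
    (v1 v2 : κ → ℂ) :
    (symCoupling s1 s2 t1 t2 ω u1 u2 v1 v2).PosSemidef :=
  (proj_posSemidef _).add (proj_posSemidef _)

lemma traceRight_symCoupling [Fintype κ] {s1 s2 t1 t2 : ℝ} (ω : ℂ) (u1 u2 : ι → ℂ)
    {v1 v2 : κ → ℂ}
    (hs1 : 0 ≤ s1) (hs2 : 0 ≤ s2) (ht1 : 0 ≤ t1) (ht2 : 0 ≤ t2) (ht : t1 + t2 = 1)
    (hω : ω * star ω = 1)
    (hv1 : star v1 ⬝ᵥ v1 = 1) (hv2 : star v2 ⬝ᵥ v2 = 1) (hv12 : star v1 ⬝ᵥ v2 = 0) :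
    traceRight (symCoupling s1 s2 t1 t2 ω u1 u2 v1 v2) =
      (s1 : ℂ) • proj u1 + (s2 : ℂ) • proj u2 := by
  have hv21 : star v2 ⬝ᵥ v1 = 0 := by rw [star_dotProduct, hv12, star_zero]
  have ht' : (t1 : ℂ) + t2 = 1 := by exact_mod_cast ht
  rw [symCoupling, traceRight_add,
    traceRight_proj_smul_tensorVec_add_smul_tensorVec _ _ _ _ hv1 hv2 hv12,
    traceRight_proj_smul_tensorVec_add_smul_tensorVec _ _ _ _ hv2 hv1 hv21]
  simp only [star_mul', star_neg, star_ofReal]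
  have hsqs1 := ofReal_sqrt_sq hs1
  have hsqs2 := ofReal_sqrt_sq hs2
  have hsqt1 := ofReal_sqrt_sq ht1
  have hsqt2 := ofReal_sqrt_sq ht2
  match_scalars
  · linear_combination (↑√t1 ^ 2 + ↑√t2 ^ 2 : ℂ) * hsqs1 + (s1 : ℂ) * (hsqt1 + hsqt2 + ht')
  · linear_combination (↑√t1 ^ 2 + ↑√t2 ^ 2 : ℂ) * hsqs2 + (s2 : ℂ) * (hsqt1 + hsqt2 + ht')
      + (↑√s2 * ↑√t2) ^ 2 * hω

lemma traceLeft_symCoupling [Fintype ι] {s1 s2 t1 t2 : ℝ} {ω : ℂ} {u1 u2 : ι → ℂ}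
    (v1 v2 : κ → ℂ)
    (hs1 : 0 ≤ s1) (hs2 : 0 ≤ s2) (hs : s1 + s2 = 1) (ht1 : 0 ≤ t1) (ht2 : 0 ≤ t2)
    (hω : ω * star ω = 1) (hωu : ω * star (star u2 ⬝ᵥ u1) = star u2 ⬝ᵥ u1)
    (hu1 : star u1 ⬝ᵥ u1 = 1) (hu2 : star u2 ⬝ᵥ u2 = 1) :
    traceLeft (symCoupling s1 s2 t1 t2 ω u1 u2 v1 v2) =
      (t1 : ℂ) • proj v1 + (t2 : ℂ) • proj v2 := by
  have hs' : (s1 : ℂ) + s2 = 1 := by exact_mod_cast hs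
  rw [symCoupling, traceLeft_add, traceLeft_proj_smul_tensorVec_add_smul_tensorVec _ _ _ _ hu1 hu2,
    traceLeft_proj_smul_tensorVec_add_smul_tensorVec _ _ _ _ hu1 hu2, star_dotProduct u1 u2]
  simp only [star_mul', star_neg, star_ofReal]
  have hsqs1 := ofReal_sqrt_sq hs1
  have hsqs2 := ofReal_sqrt_sq hs2
  have hsqt1 := ofReal_sqrt_sq ht1
  have hsqt2 := ofReal_sqrt_sq ht2
  set K : ℂ := √s1 * √t1 * √s2 * √t2
  match_scalars
  · linear_combination (↑√t1 ^ 2 : ℂ) * (hsqs1 + hsqs2) + (s1 + s2 : ℂ) * hsqt1 + t1 * hs'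
  · linear_combination (↑√s2 ^ 2 * ↑√t2 ^ 2 : ℂ) * hω + (↑√t2 ^ 2 : ℂ) * (hsqs1 + hsqs2)
      + (s1 + s2 : ℂ) * hsqt2 + t2 * hs'
  · linear_combination K * star ω * hωu - K * star (star u2 ⬝ᵥ u1) * hω
  · linear_combination -K * hωu

lemma trace_swap_mul_symCoupling {d : ℕ} (s1 s2 t1 t2 : ℝ) {ω : ℂ} (u1 u2 v1 v2 : Fin d → ℂ)
    (hω : ω * star ω = 1) :
    (swap d * symCoupling s1 s2 t1 t2 ω u1 u2 v1 v2).trace =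
      Complex.normSq (√s1 * √t1 * (star v1 ⬝ᵥ u1) + √s2 * √t2 * (star v2 ⬝ᵥ u2))
        + Complex.normSq (√s1 * √t2 * (star v2 ⬝ᵥ u1) - √s2 * √t1 * ω * (star v1 ⬝ᵥ u2)) := by
  rw [symCoupling, mul_add, trace_add, trace_mul_proj, trace_mul_proj, ← Complex.mul_conj,
    ← Complex.mul_conj, ← Complex.star_def]
  simp only [mulVec_add, mulVec_smul, swap_mulVec_tensorVec, star_add, star_smul, add_dotProduct,
    dotProduct_add, smul_dotProduct, dotProduct_smul, star_tensorVec_dotProduct_tensorVec,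
    smul_eq_mul, star_dotProduct u1 v1, star_dotProduct u2 v2, star_dotProduct u1 v2,
    star_dotProduct u2 v1, star_sub, star_mul', star_neg, star_ofReal]
  linear_combination (↑√s2 ^ 2 * ↑√t2 ^ 2 * star (star v2 ⬝ᵥ u2) * (star v2 ⬝ᵥ u2)
    - ↑√t1 ^ 2 * ↑√s2 ^ 2 * star (star v1 ⬝ᵥ u2) * (star v1 ⬝ᵥ u2) : ℂ) * hω

end Coupling

theorem stmt15_general (d : ℕ) (s1 s2 t1 t2 : ℝ) (u1 u2 v1 v2 : Fin d → ℂ)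
    (hs1 : 0 ≤ s1) (hs2 : 0 ≤ s2) (hs : s1 + s2 = 1)
    (ht1 : 0 ≤ t1) (ht2 : 0 ≤ t2) (ht : t1 + t2 = 1)
    (hu1 : ∑ i, ‖u1 i‖ ^ 2 = 1) (hu2 : ∑ i, ‖u2 i‖ ^ 2 = 1)
    (hv1 : ∑ i, ‖v1 i‖ ^ 2 = 1) (hv2 : ∑ i, ‖v2 i‖ ^ 2 = 1)
    (hortho : ∑ i, star (v1 i) * v2 i = 0)
    (ρ σ : Matrix (Fin d) (Fin d) ℂ)
    (hρ : ρ = (s1 : ℂ) • proj u1 + (s2 : ℂ) • proj u2)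
    (hσ : σ = (t1 : ℂ) • proj v1 + (t2 : ℂ) • proj v2)
    (hF : fidelity ρ σ = Real.sqrt (s1 * t1) * (∑ i, star (v1 i) * u1 i).re
        + Real.sqrt (s2 * t2) * (∑ i, star (v2 i) * u2 i).re) :
    ∃ τ : Matrix ((Fin d) × (Fin d)) ((Fin d) × (Fin d)) ℂ,
      IsCoupling τ ρ σ ∧
      ((Psym d * τ).trace).re ≥ 1 / 2 + fidelity ρ σ ^ 2 / 2 := by
  obtain ⟨ω, hω, hωu⟩ := exists_phase_mul_star_eq (star u2 ⬝ᵥ u1)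
  have hu1' := star_dotProduct_self_eq_one hu1
  have hu2' := star_dotProduct_self_eq_one hu2
  have hρ1 : ρ.trace = 1 := by
    rw [hρ, trace_add, trace_smul, trace_smul, trace_proj, trace_proj, hu1', hu2', smul_eq_mul,
      smul_eq_mul, mul_one, mul_one]
    exact_mod_cast hs
  have hτ : IsCoupling (symCoupling s1 s2 t1 t2 ω u1 u2 v1 v2) ρ σ :=
    isCoupling_of_traceRight_of_traceLeft (symCoupling_posSemidef ..)
      (hρ ▸ traceRight_symCoupling ω u1 u2 hs1 hs2 ht1 ht2 ht hω
        (star_dotProduct_self_eq_one hv1) (star_dotProduct_self_eq_one hv2) hortho)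
      (hσ ▸ traceLeft_symCoupling v1 v2 hs1 hs2 hs ht1 ht2 hω hωu hu1' hu2') hρ1
  refine ⟨_, hτ, ?_⟩
  set F : ℂ := √s1 * √t1 * (star v1 ⬝ᵥ u1) + √s2 * √t2 * (star v2 ⬝ᵥ u2)
  have hFre : fidelity ρ σ = F.re := by
    simp [hF, F, Real.sqrt_mul hs1, Real.sqrt_mul hs2, dotProduct]
  rw [ge_iff_le, trace_Psym_mul, hτ.1.2, trace_swap_mul_symCoupling s1 s2 t1 t2 u1 u2 v1 v2 hω,
    hFre]
  have hF_le := Complex.re_sq_le_normSq F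
  have hG := Complex.normSq_nonneg (√s1 * √t2 * (star v2 ⬝ᵥ u1) - √s2 * √t1 * ω * (star v1 ⬝ᵥ u2))
  simp only [Complex.div_ofNat_re, Complex.add_re, Complex.one_re, Complex.ofReal_re]
  nlinarith

theorem stmt15 (d : ℕ) (s1 s2 t1 t2 : ℝ) (u1 u2 v1 v2 : Fin d → ℂ)
    (hs1 : 0 ≤ s1) (hs2 : 0 ≤ s2) (hs : s1 + s2 = 1)
    (ht1 : 0 ≤ t1) (ht2 : 0 ≤ t2) (ht : t1 + t2 = 1)
    (hu1 : ∑ i, ‖u1 i‖ ^ 2 = 1) (hu2 : ∑ i, ‖u2 i‖ ^ 2 = 1)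
    (hv1 : ∑ i, ‖v1 i‖ ^ 2 = 1) (hv2 : ∑ i, ‖v2 i‖ ^ 2 = 1)
    (hortho : ∑ i, star (v1 i) * v2 i = 0)
    (hip1re : 0 ≤ (∑ i, star (v1 i) * u1 i).re)
    (hip1im : (∑ i, star (v1 i) * u1 i).im = 0)
    (hip2re : 0 ≤ (∑ i, star (v2 i) * u2 i).re)
    (hip2im : (∑ i, star (v2 i) * u2 i).im = 0)
    (ρ σ : Matrix (Fin d) (Fin d) ℂ)
    (hρ : ρ = (s1 : ℂ) • proj u1 + (s2 : ℂ) • proj u2)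
    (hσ : σ = (t1 : ℂ) • proj v1 + (t2 : ℂ) • proj v2)
    (hF : fidelity ρ σ = Real.sqrt (s1 * t1) * (∑ i, star (v1 i) * u1 i).re
        + Real.sqrt (s2 * t2) * (∑ i, star (v2 i) * u2 i).re) :
    ∃ τ : Matrix ((Fin d) × (Fin d)) ((Fin d) × (Fin d)) ℂ,
      IsCoupling τ ρ σ ∧
      ((Psym d * τ).trace).re ≥ 1 / 2 + fidelity ρ σ ^ 2 / 2 :=
  stmt15_general d s1 s2 t1 t2 u1 u2 v1 v2 hs1 hs2 hs ht1 ht2 ht hu1 hu2 hv1 hv2 hortho ρ σ hρ hσ hF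
end QEMD
end
end
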